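/- arXiv:1710.02910 — 2 statements merged into one kernel-verified Lean document; each statement's English description precedes it below -/
import Mathlib

section
/- With the weight function l(t,x) = λ(x² + t²(t−T)²) and the coefficient functions B, G, D, Φ₁, Φ defined from l as in the context, the following identities hold for all (t,x) ∈ ℝ²: (i) B − (G − Φ₁)ₓ = −32 λ³ x³, and (ii) 3 ( B − (G − Φ₁)ₓ )ₓ + (Φ₁)ₓₓ + 2Φ + 2 (G − Φ₁) Φ₁ − 2 (G − Φ₁)ₓ D − ( (G − Φ₁) D )ₓ = 352 λ³ x². -/
/-- Partial derivative in the time variable (first argument). -/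
noncomputable def pt (y : ℝ → ℝ → ℝ) : ℝ → ℝ → ℝ := fun t x => deriv (fun s => y s x) t

/-- Partial derivative in the space variable (second argument). -/
noncomputable def px (y : ℝ → ℝ → ℝ) : ℝ → ℝ → ℝ := fun t x => deriv (fun z => y t z) x

/-- The Carleman weight exponent `l(t,x) = λ (x² + t² (t−T)²)`. -/
noncomputable def lw (lam T : ℝ) : ℝ → ℝ → ℝ := fun t x => lam * (x^2 + t^2 * (t - T)^2)

noncomputable def l_t (lam T : ℝ) : ℝ → ℝ → ℝ := pt (lw lam T)
noncomputable def l_tt (lam T : ℝ) : ℝ → ℝ → ℝ := pt (pt (lw lam T))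
noncomputable def l_x (lam T : ℝ) : ℝ → ℝ → ℝ := px (lw lam T)
noncomputable def l_xx (lam T : ℝ) : ℝ → ℝ → ℝ := px (px (lw lam T))
noncomputable def l_xxx (lam T : ℝ) : ℝ → ℝ → ℝ := px (px (px (lw lam T)))
noncomputable def l_xxxx (lam T : ℝ) : ℝ → ℝ → ℝ := px (px (px (px (lw lam T))))

/-- `A = l_x⁴ + 4 l_x l_xxx − l_xxxx − 6 l_x² l_xx + 3 l_xx² + l_t² − l_tt`. -/
noncomputable def Aco (lam T : ℝ) : ℝ → ℝ → ℝ := fun t x =>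
  (l_x lam T t x)^4 + 4 * l_x lam T t x * l_xxx lam T t x - l_xxxx lam T t x
    - 6 * (l_x lam T t x)^2 * l_xx lam T t x + 3 * (l_xx lam T t x)^2
    + (l_t lam T t x)^2 - l_tt lam T t x

/-- `G = 6 l_x² − 6 l_xx`. -/
noncomputable def Gco (lam T : ℝ) : ℝ → ℝ → ℝ := fun t x =>
  6 * (l_x lam T t x)^2 - 6 * l_xx lam T t x

/-- `B = 12 l_x l_xx − 4 l_x³ − 4 l_xxx`. -/
noncomputable def Bco (lam T : ℝ) : ℝ → ℝ → ℝ := fun t x =>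
  12 * l_x lam T t x * l_xx lam T t x - 4 * (l_x lam T t x)^3 - 4 * l_xxx lam T t x

/-- `D = −4 l_x`. -/
noncomputable def Dco (lam T : ℝ) : ℝ → ℝ → ℝ := fun t x => -4 * l_x lam T t x

/-- `Φ₁ = −6 l_xx`. -/
noncomputable def Phi1 (lam T : ℝ) : ℝ → ℝ → ℝ := fun t x => -6 * l_xx lam T t x

/-- `Φ = −8 l_x² l_xx`. -/
noncomputable def Phi (lam T : ℝ) : ℝ → ℝ → ℝ := fun t x =>
  -8 * (l_x lam T t x)^2 * l_xx lam T t x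

/-- `G − Φ₁`. -/
noncomputable def GmP1 (lam T : ℝ) : ℝ → ℝ → ℝ := fun t x =>
  Gco lam T t x - Phi1 lam T t x

/-- `B − (G − Φ₁)ₓ`. -/
noncomputable def BmGx (lam T : ℝ) : ℝ → ℝ → ℝ := fun t x =>
  Bco lam T t x - px (GmP1 lam T) t x

/-- `A − Φ`. -/
noncomputable def AmP (lam T : ℝ) : ℝ → ℝ → ℝ := fun t x =>
  Aco lam T t x - Phi lam T t x

/-
For fixed `t` every coefficient is a polynomial in `x` alone: `l_x = 2λx`, `l_xx = 2λ`, `l_xxx = 0`,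
hence `G − Φ₁ = 24λ²x²` and `D = −8λx`. The `t`-dependent part `λ t² (t − T)²` of the weight is a
constant for `∂ₓ`, so both identities reduce to differentiating monomials.
-/

theorem px_of_eq_monomial_add_const {y : ℝ → ℝ → ℝ} {t c d : ℝ} {n : ℕ}
    (h : ∀ z, y t z = c * z ^ n + d) (x : ℝ) : px y t x = c * n * x ^ (n - 1) := by
  have hy : y t = fun z => c * z ^ n + d := funext h
  have hd := ((hasDerivAt_pow n x).const_mul c).add_const d
  change deriv (y t) x = _
  rw [hy, hd.deriv]
  ring

theorem px_of_eq_const {y : ℝ → ℝ → ℝ} {t c : ℝ} (h : ∀ z, y t z = c) (x : ℝ) : px y t x = 0 := by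
  simpa using px_of_eq_monomial_add_const (c := 0) (d := c) (n := 0) (fun z => by simp [h z]) x

section Coefficients

variable (lam T t x : ℝ)

theorem l_x_eq : l_x lam T t x = 2 * lam * x := by
  rw [l_x, px_of_eq_monomial_add_const (c := lam) (d := lam * (t ^ 2 * (t - T) ^ 2)) (n := 2)
    (fun z => by simp only [lw]; ring)]
  ring

theorem l_xx_eq : l_xx lam T t x = 2 * lam := by
  rw [l_xx, px_of_eq_monomial_add_const (c := 2 * lam) (d := 0) (n := 1)
    (fun z => by rw [← l_x, l_x_eq]; ring)]
  ring

theorem l_xxx_eq : l_xxx lam T t x = 0 :=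
  px_of_eq_const (fun z => l_xx_eq lam T t z) x

theorem GmP1_eq : GmP1 lam T t x = 24 * lam ^ 2 * x ^ 2 := by
  simp only [GmP1, Gco, Phi1, l_x_eq, l_xx_eq]
  ring

theorem px_GmP1_eq : px (GmP1 lam T) t x = 48 * lam ^ 2 * x := by
  rw [px_of_eq_monomial_add_const (c := 24 * lam ^ 2) (d := 0) (n := 2)
    (fun z => by rw [GmP1_eq, add_zero])]
  ring

theorem BmGx_eq : BmGx lam T t x = -32 * lam ^ 3 * x ^ 3 := by
  simp only [BmGx, Bco, px_GmP1_eq, l_x_eq, l_xx_eq, l_xxx_eq]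
  ring

theorem px_BmGx_eq : px (BmGx lam T) t x = -96 * lam ^ 3 * x ^ 2 := by
  rw [px_of_eq_monomial_add_const (c := -32 * lam ^ 3) (d := 0) (n := 3)
    (fun z => by rw [BmGx_eq, add_zero])]
  ring

theorem px_px_Phi1_eq : px (px (Phi1 lam T)) t x = 0 := by
  have hPhi1 : ∀ z, px (Phi1 lam T) t z = 0 :=
    px_of_eq_const (fun z => by rw [Phi1, l_xx_eq])
  exact px_of_eq_const hPhi1 x

theorem px_GmP1_mul_Dco_eq :
    px (fun t x => GmP1 lam T t x * Dco lam T t x) t x = -576 * lam ^ 3 * x ^ 2 := by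
  rw [px_of_eq_monomial_add_const (c := -192 * lam ^ 3) (d := 0) (n := 3)
    (fun z => by simp only [GmP1_eq, Dco, l_x_eq]; ring)]
  ring

end Coefficients

theorem coefficient_identities_F2_general (lam T : ℝ) :
    (∀ t x : ℝ, BmGx lam T t x = -32 * lam^3 * x^3) ∧
    (∀ t x : ℝ,
      3 * px (BmGx lam T) t x + px (px (Phi1 lam T)) t x + 2 * Phi lam T t x
        + 2 * GmP1 lam T t x * Phi1 lam T t x
        - 2 * px (GmP1 lam T) t x * Dco lam T t x
        - px (fun t x => GmP1 lam T t x * Dco lam T t x) t x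
      = 352 * lam^3 * x^2) := by
  refine ⟨BmGx_eq lam T, fun t x => ?_⟩
  rw [px_BmGx_eq, px_px_Phi1_eq, px_GmP1_mul_Dco_eq, px_GmP1_eq, GmP1_eq]
  simp only [Phi, Phi1, Dco, l_x_eq, l_xx_eq]
  ring

/-- Coefficient computations from the Carleman weight:
(i) `B − (G − Φ₁)ₓ = −32 λ³ x³`; (ii) the coefficient `F₂` of `u_xx²` equals `352 λ³ x²`. -/
theorem coefficient_identities_F2 (lam T a b : ℝ)
    (hlam : 0 < lam) (hT : 0 < T) (ha : 0 < a) (hab : a ≤ b) :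
    (∀ t x : ℝ, BmGx lam T t x = -32 * lam^3 * x^3) ∧
    (∀ t x : ℝ,
      3 * px (BmGx lam T) t x + px (px (Phi1 lam T)) t x + 2 * Phi lam T t x
        + 2 * GmP1 lam T t x * Phi1 lam T t x
        - 2 * px (GmP1 lam T) t x * Dco lam T t x
        - px (fun t x => GmP1 lam T t x * Dco lam T t x) t x
      = 352 * lam^3 * x^2) :=
  coefficient_identities_F2_general lam T
end

section
/- Let λ ∈ ℝ, let a < b be real numbers, and let φ(x) = λx². Then for every three-times continuously differentiable function v : [a,b] → ℝ with v(a) = v(b) = 0 and v′(a) = v′(b) = 0, one has ∫ₐᵇ v(x) ( −4 φ′(x)³ v′(x) − 6 φ″(x) v″(x) − 4 φ′(x) v‴(x) ) dx = ∫ₐᵇ 6 φ′(x)² φ″(x) v(x)² dx = 48 λ³ ∫ₐᵇ x² v(x)² dx. -/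
open MeasureTheory

/-- The spatial part `φ(x) = λ x²` of the Carleman weight. -/
noncomputable def phiW (lam : ℝ) : ℝ → ℝ := fun x => lam * x^2

/-!
Integrating by parts moves all derivatives of `v` onto the weight: for a general weight `φ`
the cross term equals `∫ (6 φ′² φ″ − φ⁗) v² dx`, because the difference of the two integrands is
the derivative of `F = −2 φ′³ v² − 4 φ′ v v″ + 2 φ′ v′² − 2 φ″ v v′ + φ‴ v²`, which vanishes
where `v` and `v′` do. For `φ = λx²` one has `φ⁗ = 0` and `6 φ′² φ″ = 48 λ³ x²`.
-/

theorem hasDerivAt_iterate_deriv {f : ℝ → ℝ} {n k : ℕ} (hf : ContDiff ℝ n f) (hk : k < n)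
    (x : ℝ) : HasDerivAt (deriv^[k] f) (deriv^[k + 1] f x) x := by
  rw [Function.iterate_succ_apply', ← iteratedDeriv_eq_iterate]
  exact (hf.differentiable_iteratedDeriv k (mod_cast hk) x).hasDerivAt

theorem continuous_iterate_deriv {f : ℝ → ℝ} {n k : ℕ} (hf : ContDiff ℝ n f) (hk : k ≤ n) :
    Continuous (deriv^[k] f) := by
  rw [← iteratedDeriv_eq_iterate]
  exact hf.continuous_iteratedDeriv k (mod_cast hk)

noncomputable def crossTermPotential (φ v : ℝ → ℝ) (x : ℝ) : ℝ :=
  -2 * deriv φ x ^ 3 * v x ^ 2 - 4 * deriv φ x * v x * deriv^[2] v x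
    + 2 * deriv φ x * deriv v x ^ 2 - 2 * deriv^[2] φ x * v x * deriv v x
    + deriv^[3] φ x * v x ^ 2

section

variable {φ v : ℝ → ℝ}

theorem crossTermPotential_eq_zero {x : ℝ} (hv : v x = 0) (hv' : deriv v x = 0) :
    crossTermPotential φ v x = 0 := by
  simp [crossTermPotential, hv, hv']

theorem hasDerivAt_crossTermPotential (hφ : ContDiff ℝ 4 φ) (hv : ContDiff ℝ 3 v) (x : ℝ) :
    HasDerivAt (crossTermPotential φ v)
      (v x * (-4 * deriv φ x ^ 3 * deriv v x - 6 * deriv^[2] φ x * deriv^[2] v x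
          - 4 * deriv φ x * deriv^[3] v x)
        - (6 * deriv φ x ^ 2 * deriv^[2] φ x - deriv^[4] φ x) * v x ^ 2) x := by
  have v0 : HasDerivAt v (deriv v x) x := hasDerivAt_iterate_deriv (k := 0) hv (by norm_num) x
  have v1 : HasDerivAt (deriv v) (deriv^[2] v x) x :=
    hasDerivAt_iterate_deriv (k := 1) hv (by norm_num) x
  have v2 : HasDerivAt (deriv^[2] v) (deriv^[3] v x) x :=
    hasDerivAt_iterate_deriv hv (by norm_num) x
  have φ1 : HasDerivAt (deriv φ) (deriv^[2] φ x) x :=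
    hasDerivAt_iterate_deriv (k := 1) hφ (by norm_num) x
  have φ2 : HasDerivAt (deriv^[2] φ) (deriv^[3] φ x) x :=
    hasDerivAt_iterate_deriv hφ (by norm_num) x
  have φ3 : HasDerivAt (deriv^[3] φ) (deriv^[4] φ x) x :=
    hasDerivAt_iterate_deriv hφ (by norm_num) x
  have := (((((φ1.fun_pow 3).const_mul (-2)).fun_mul (v0.fun_pow 2)).fun_sub
    (((φ1.const_mul 4).fun_mul v0).fun_mul v2)).fun_add
    ((φ1.const_mul 2).fun_mul (v1.fun_pow 2))).fun_sub
    (((φ2.const_mul 2).fun_mul v0).fun_mul v1) |>.fun_add (φ3.fun_mul (v0.fun_pow 2))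
  refine this.congr_deriv ?_
  norm_num
  ring

theorem integral_cross_term (hφ : ContDiff ℝ 4 φ) (hv : ContDiff ℝ 3 v) {a b : ℝ}
    (ha : v a = 0) (hb : v b = 0) (ha' : deriv v a = 0) (hb' : deriv v b = 0) :
    ∫ x in a..b, v x * (-4 * deriv φ x ^ 3 * deriv v x - 6 * deriv^[2] φ x * deriv^[2] v x
        - 4 * deriv φ x * deriv^[3] v x)
      = ∫ x in a..b, (6 * deriv φ x ^ 2 * deriv^[2] φ x - deriv^[4] φ x) * v x ^ 2 := by
  have cv0 : Continuous v := continuous_iterate_deriv (k := 0) hv (by norm_num)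
  have cv1 : Continuous (deriv v) := continuous_iterate_deriv (k := 1) hv (by norm_num)
  have cv2 : Continuous (deriv^[2] v) := continuous_iterate_deriv hv (by norm_num)
  have cv3 : Continuous (deriv^[3] v) := continuous_iterate_deriv hv (by norm_num)
  have cφ1 : Continuous (deriv φ) := continuous_iterate_deriv (k := 1) hφ (by norm_num)
  have cφ2 : Continuous (deriv^[2] φ) := continuous_iterate_deriv hφ (by norm_num)
  have cφ4 : Continuous (deriv^[4] φ) := continuous_iterate_deriv hφ (by norm_num)
  have cL : Continuous fun x => v x * (-4 * deriv φ x ^ 3 * deriv v x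
      - 6 * deriv^[2] φ x * deriv^[2] v x - 4 * deriv φ x * deriv^[3] v x) := by
    fun_prop
  have cR : Continuous fun x => (6 * deriv φ x ^ 2 * deriv^[2] φ x - deriv^[4] φ x) * v x ^ 2 := by
    fun_prop
  rw [← sub_eq_zero, ← intervalIntegral.integral_sub (cL.intervalIntegrable a b)
    (cR.intervalIntegrable a b), intervalIntegral.integral_eq_sub_of_hasDerivAt
      (fun x _ => hasDerivAt_crossTermPotential hφ hv x) ((cL.sub cR).intervalIntegrable a b),
    crossTermPotential_eq_zero hb hb', crossTermPotential_eq_zero ha ha', sub_zero]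

end

theorem deriv_phiW (lam : ℝ) : deriv (phiW lam) = fun x => 2 * lam * x := by
  ext x
  rw [show phiW lam = fun y => lam * y ^ 2 from rfl, ((hasDerivAt_pow 2 x).const_mul lam).deriv]
  ring

theorem iterate_deriv_two_phiW (lam : ℝ) : deriv^[2] (phiW lam) = fun _ => 2 * lam := by
  ext x
  rw [Function.iterate_succ_apply', Function.iterate_one, deriv_phiW]
  simp

theorem iterate_deriv_four_phiW (lam : ℝ) : deriv^[4] (phiW lam) = 0 := by
  rw [show 4 = 2 + 2 from rfl, Function.iterate_add_apply, iterate_deriv_two_phiW]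
  ext
  simp

theorem contDiff_phiW (lam : ℝ) {n : WithTop ℕ∞} : ContDiff ℝ n (phiW lam) := by
  unfold phiW
  fun_prop

theorem cross_term_identity_general (lam a b : ℝ) :
    ∀ v : ℝ → ℝ, ContDiff ℝ 3 v →
      v a = 0 → v b = 0 → deriv v a = 0 → deriv v b = 0 →
      ((∫ x in a..b, v x *
            (-4 * (deriv (phiW lam) x)^3 * deriv v x
              - 6 * deriv^[2] (phiW lam) x * deriv^[2] v x
              - 4 * deriv (phiW lam) x * deriv^[3] v x))
          = ∫ x in a..b, 6 * (deriv (phiW lam) x)^2 * deriv^[2] (phiW lam) x * (v x)^2)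
      ∧ ((∫ x in a..b, 6 * (deriv (phiW lam) x)^2 * deriv^[2] (phiW lam) x * (v x)^2)
          = 48 * lam^3 * ∫ x in a..b, x^2 * (v x)^2) := by
  intro v hv ha hb ha' hb'
  constructor
  · simpa [iterate_deriv_four_phiW] using integral_cross_term (contDiff_phiW lam) hv ha hb ha' hb'
  · rw [deriv_phiW, iterate_deriv_two_phiW, ← intervalIntegral.integral_const_mul]
    congr 1 with x
    ring

/-- The integral identity for the cross term `A₃`: with `φ(x) = λx²` and `v`
vanishing together with `v′` at both endpoints,
`∫ v (−4 φ′³ v′ − 6 φ″ v″ − 4 φ′ v‴) dx = ∫ 6 φ′² φ″ v² dx = 48 λ³ ∫ x² v² dx`. -/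
theorem cross_term_identity (lam a b : ℝ) (hab : a < b) :
    ∀ v : ℝ → ℝ, ContDiff ℝ 3 v →
      v a = 0 → v b = 0 → deriv v a = 0 → deriv v b = 0 →
      ((∫ x in a..b, v x *
            (-4 * (deriv (phiW lam) x)^3 * deriv v x
              - 6 * deriv^[2] (phiW lam) x * deriv^[2] v x
              - 4 * deriv (phiW lam) x * deriv^[3] v x))
          = ∫ x in a..b, 6 * (deriv (phiW lam) x)^2 * deriv^[2] (phiW lam) x * (v x)^2)
      ∧ ((∫ x in a..b, 6 * (deriv (phiW lam) x)^2 * deriv^[2] (phiW lam) x * (v x)^2)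
          = 48 * lam^3 * ∫ x in a..b, x^2 * (v x)^2) :=
  cross_term_identity_general lam a b
end
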